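/- For all integers d ≥ 1 and ℓ ≥ 1: b^c_{d,ℓ}(ℓ) = 1, and for every n ≥ ℓ+1, b^c_{d,ℓ}(n) = b^c_{d,ℓ}(n−ℓ) + Σ_{j=1}^{min(d,⌊n/2⌋)} (−1)^{j+1}·C(d,j)·( b^c_{d,ℓ}(n−2j) + Σ_{r=1}^{n−2j−1} b^c_{d,ℓ}(r)·b^c_{d,ℓ}(n−2j−r) ), with the convention b^c_{d,ℓ}(j) = 0 for j ≤ ℓ−1. -/

import Mathlib

namespace MultiOp

mutual
inductive Atom (d : ℕ) : Type where
  | star : Atom d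
  | op : Fin d → Mon d → Atom d
inductive Mon (d : ℕ) : Type where
  | single : Atom d → Mon d
  | cons : Atom d → Mon d → Mon d
end

mutual
def Atom.deg {d : ℕ} : Atom d → ℕ
  | .star => 1
  | .op _ v => v.deg
def Mon.deg {d : ℕ} : Mon d → ℕ
  | .single a => a.deg
  | .cons a v => a.deg + v.deg
end

mutual
def Atom.mult {d : ℕ} : Atom d → Fin d → ℕ
  | .star, _ => 0
  | .op i v, j => (if i = j then 1 else 0) + v.mult j
def Mon.mult {d : ℕ} : Mon d → Fin d → ℕ
  | .single a, j => a.mult j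
  | .cons a v, j => a.mult j + v.mult j
end

noncomputable def a (d r : ℕ) (s : Fin d → ℕ) : ℕ :=
  Nat.card {v : Mon d // v.deg = r ∧ v.mult = s}

noncomputable def b (d ℓ n : ℕ) : ℕ :=
  Nat.card {v : Mon d // ℓ * v.deg + 2 * (∑ i, v.mult i) = n}

noncomputable def A (d : ℕ) : MvPowerSeries (Option (Fin d)) ℚ :=
  fun e => (a d (e none) (fun i => e (some i)) : ℚ)

noncomputable def B (d ℓ : ℕ) : PowerSeries ℚ :=
  PowerSeries.mk fun n => (b d ℓ n : ℚ)

def narayana (n k : ℕ) : ℚ := (n.choose k * n.choose (k + 1) : ℚ) / n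

/-- Concatenation (the associative multiplication) of monomials. -/
def Mon.mul {d : ℕ} : Mon d → Mon d → Mon d
  | .single a, w => .cons a w
  | .cons a v, w => .cons a (v.mul w)

/-- Application of the unary operator `P i` to a monomial. -/
def Mon.P {d : ℕ} (i : Fin d) (v : Mon d) : Mon d := .single (.op i v)

/- Canonical monomials: along every maximal nested chain of unary operators the
operator indices are weakly increasing, i.e. a subword `P i (P j (⋯))` occurs only
when `i ≤ j`. -/
mutual
inductive AtomCanon : {d : ℕ} → Atom d → Prop where
  | star {d : ℕ} : AtomCanon (Atom.star : Atom d)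
  | op {d : ℕ} (i : Fin d) (v : Mon d) : MonCanon v →
      (∀ (j : Fin d) (w : Mon d), v = Mon.single (Atom.op j w) → i ≤ j) →
      AtomCanon (Atom.op i v)
inductive MonCanon : {d : ℕ} → Mon d → Prop where
  | single {d : ℕ} (a : Atom d) : AtomCanon a → MonCanon (Mon.single a)
  | cons {d : ℕ} (a : Atom d) (v : Mon d) : AtomCanon a → MonCanon v →
      MonCanon (Mon.cons a v)
end

/-- `b^c_{d,ℓ}(n)`: the number of canonical monomials `v` with
`ℓ·deg(v) + 2·(s₁+⋯+s_d) = n`, where `s` is the multiplicity vector of `v`. -/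
noncomputable def bc (d ℓ n : ℕ) : ℕ :=
  Nat.card {v : Mon d // MonCanon v ∧ ℓ * v.deg + 2 * (∑ i, v.mult i) = n}

-- decidable eq
mutual
def Atom.beq {d : ℕ} : Atom d → Atom d → Bool
  | .star, .star => true
  | .op i v, .op j w => i = j && Mon.beq v w
  | _, _ => false
def Mon.beq {d : ℕ} : Mon d → Mon d → Bool
  | .single a, .single b => Atom.beq a b
  | .cons a v, .cons b w => Atom.beq a b && Mon.beq v w
  | _, _ => false
end

mutual
theorem Atom.beq_iff {d : ℕ} : ∀ a b : Atom d, Atom.beq a b = true ↔ a = b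
  | .star, .star => by simp [Atom.beq]
  | .star, .op _ _ => by simp [Atom.beq]
  | .op _ _, .star => by simp [Atom.beq]
  | .op i v, .op j w => by
      simp [Atom.beq, Mon.beq_iff v w]
theorem Mon.beq_iff {d : ℕ} : ∀ a b : Mon d, Mon.beq a b = true ↔ a = b
  | .single a, .single b => by simp [Mon.beq, Atom.beq_iff a b]
  | .single _, .cons _ _ => by simp [Mon.beq]
  | .cons _ _, .single _ => by simp [Mon.beq]
  | .cons a v, .cons b w => by simp [Mon.beq, Atom.beq_iff a b, Mon.beq_iff v w]
end

instance {d : ℕ} : DecidableEq (Mon d) := fun v w =>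
  decidable_of_iff _ (Mon.beq_iff v w)
instance {d : ℕ} : DecidableEq (Atom d) := fun v w =>
  decidable_of_iff _ (Atom.beq_iff v w)

variable {d : ℕ}


mutual
def Atom.wt (ℓ : ℕ) : Atom d → ℕ
  | .star => ℓ
  | .op _ v => 2 + Mon.wt ℓ v
def Mon.wt (ℓ : ℕ) : Mon d → ℕ
  | .single a => Atom.wt ℓ a
  | .cons a v => Atom.wt ℓ a + Mon.wt ℓ v
end

mutual
def Atom.size : Atom d → ℕ
  | .star => 1
  | .op _ v => 1 + Mon.size v
def Mon.size : Mon d → ℕ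
  | .single a => Atom.size a
  | .cons a v => Atom.size a + Mon.size v
end

mutual
theorem Atom.wt_eq (ℓ : ℕ) : ∀ a : Atom d, Atom.wt ℓ a = ℓ * a.deg + 2 * (∑ i, a.mult i)
  | .star => by simp [Atom.wt, Atom.deg, Atom.mult]
  | .op i v => by
      have h := Mon.wt_eq ℓ v
      simp only [Atom.wt, Atom.deg, Atom.mult, h]
      have : (∑ j, ((if i = j then 1 else 0) + v.mult j)) = 1 + ∑ j, v.mult j := by
        rw [Finset.sum_add_distrib, Finset.sum_ite_eq Finset.univ i (fun _ => 1)]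
        simp
      rw [this]; ring
theorem Mon.wt_eq (ℓ : ℕ) : ∀ v : Mon d, Mon.wt ℓ v = ℓ * v.deg + 2 * (∑ i, v.mult i)
  | .single a => Atom.wt_eq ℓ a
  | .cons a v => by
      simp only [Mon.wt, Mon.deg, Mon.mult, Atom.wt_eq ℓ a, Mon.wt_eq ℓ v,
        Finset.sum_add_distrib]
      ring
end

mutual
theorem Atom.one_le_size : ∀ a : Atom d, 1 ≤ a.size
  | .star => le_refl _
  | .op _ v => by simp [Atom.size]
theorem Mon.one_le_size : ∀ v : Mon d, 1 ≤ v.size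
  | .single a => Atom.one_le_size a
  | .cons a v => le_trans (Atom.one_le_size a) (Nat.le_add_right _ _)
end

mutual
theorem Atom.size_le_wt {ℓ : ℕ} (hl : 1 ≤ ℓ) : ∀ a : Atom d, a.size ≤ Atom.wt ℓ a
  | .star => hl
  | .op _ v => by
      simp only [Atom.size, Atom.wt]
      have := Mon.size_le_wt hl v; omega
theorem Mon.size_le_wt {ℓ : ℕ} (hl : 1 ≤ ℓ) : ∀ v : Mon d, v.size ≤ Mon.wt ℓ v
  | .single a => Atom.size_le_wt hl a
  | .cons a v => Nat.add_le_add (Atom.size_le_wt hl a) (Mon.size_le_wt hl v)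
end

def Mon.topOk {d : ℕ} (i : Fin d) : Mon d → Bool
  | .single (.op j _) => decide (i ≤ j)
  | _ => true

mutual
def Atom.canon {d : ℕ} : Atom d → Bool
  | .star => true
  | .op i v => Mon.canon v && Mon.topOk i v
def Mon.canon {d : ℕ} : Mon d → Bool
  | .single a => Atom.canon a
  | .cons a v => Atom.canon a && Mon.canon v
end

theorem Mon.topOk_iff {d : ℕ} (i : Fin d) (v : Mon d) :
    Mon.topOk i v = true ↔ ∀ (j : Fin d) (w : Mon d), v = Mon.single (Atom.op j w) → i ≤ j := by
  cases v with
  | single a => cases a with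
    | star => simp [Mon.topOk]
    | op j w => simp [Mon.topOk]
  | cons a w => simp [Mon.topOk]

mutual
theorem Atom.canon_iff {d : ℕ} : ∀ a : Atom d, Atom.canon a = true ↔ AtomCanon a
  | .star => by simp [Atom.canon]; exact AtomCanon.star
  | .op i v => by
      simp only [Atom.canon, Bool.and_eq_true, Mon.canon_iff v, Mon.topOk_iff]
      constructor
      · rintro ⟨h1, h2⟩; exact AtomCanon.op i v h1 h2
      · rintro h; cases h with
        | op _ _ h1 h2 => exact ⟨h1, h2⟩
theorem Mon.canon_iff {d : ℕ} : ∀ v : Mon d, Mon.canon v = true ↔ MonCanon v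
  | .single a => by
      simp only [Mon.canon, Atom.canon_iff a]
      constructor
      · exact fun h => MonCanon.single a h
      · rintro h; cases h with | single _ h1 => exact h1
  | .cons a v => by
      simp only [Mon.canon, Bool.and_eq_true, Atom.canon_iff a, Mon.canon_iff v]
      constructor
      · rintro ⟨h1, h2⟩; exact MonCanon.cons a v h1 h2
      · rintro h; cases h with | cons _ _ h1 h2 => exact ⟨h1, h2⟩
end

def enum (d : ℕ) : ℕ → Finset (Atom d) × Finset (Mon d)
  | 0 => (∅, ∅)
  | n+1 =>
    let p := enum d n
    let A1 : Finset (Atom d) :=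
      insert .star ((Finset.univ ×ˢ p.2).image fun q => .op q.1 q.2)
    (A1, (A1.image .single) ∪ ((p.1 ×ˢ p.2).image fun q => .cons q.1 q.2))

theorem enum_mono (d n : ℕ) :
    (enum d n).1 ⊆ (enum d (n+1)).1 ∧ (enum d n).2 ⊆ (enum d (n+1)).2 := by
  induction n with
  | zero => simp [enum]
  | succ n ih =>
    constructor
    · intro a ha
      rw [enum] at ha ⊢
      simp only [Finset.mem_insert, Finset.mem_image, Finset.mem_product] at ha ⊢
      rcases ha with h | ⟨q, ⟨_, hq⟩, rfl⟩
      · exact Or.inl h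
      · exact Or.inr ⟨q, ⟨Finset.mem_univ _, ih.2 hq⟩, rfl⟩
    · intro v hv
      rw [enum] at hv ⊢
      simp only [Finset.mem_union, Finset.mem_image, Finset.mem_product,
        Finset.mem_insert] at hv ⊢
      rcases hv with ⟨a, ha, rfl⟩ | ⟨q, ⟨hq1, hq2⟩, rfl⟩
      · refine Or.inl ⟨a, ?_, rfl⟩
        rcases ha with h | ⟨q, ⟨_, hq⟩, rfl⟩
        · exact Or.inl h
        · exact Or.inr ⟨q, ⟨Finset.mem_univ _, ih.2 hq⟩, rfl⟩
      · exact Or.inr ⟨q, ⟨ih.1 hq1, ih.2 hq2⟩, rfl⟩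

mutual
theorem Atom.mem_enum {d : ℕ} : ∀ (a : Atom d) (n : ℕ), a.size ≤ n → a ∈ (enum d n).1
  | .star, n, h => by
      match n, h with
      | 0, h => exact absurd h (by simp [Atom.size])
      | n+1, _ => rw [enum]; exact Finset.mem_insert_self _ _
  | .op i v, n, h => by
      match n, h with
      | 0, h => exact absurd h (by have h1 := Mon.one_le_size v; simp only [Atom.size]; omega)
      | n+1, h =>
        have hv : v.size ≤ n := by
          have : (Atom.op i v).size = 1 + v.size := rfl
          omega
        rw [enum]
        refine Finset.mem_insert_of_mem (Finset.mem_image.2 ⟨(i, v), ?_, rfl⟩)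
        exact Finset.mem_product.2 ⟨Finset.mem_univ _, Mon.mem_enum v n hv⟩
theorem Mon.mem_enum {d : ℕ} : ∀ (v : Mon d) (n : ℕ), v.size ≤ n → v ∈ (enum d n).2
  | .single a, n, h => by
      match n, h with
      | 0, h => exact absurd h (by have h1 := Atom.one_le_size a; simp only [Mon.size]; omega)
      | n+1, h =>
        rw [enum]
        exact Finset.mem_union_left _
          (Finset.mem_image.2 ⟨a, Atom.mem_enum a (n+1) h, rfl⟩)
  | .cons a v, n, h => by
      match n, h with
      | 0, h => exact absurd h (by have h1 := Atom.one_le_size a; have h2 := Mon.one_le_size v; simp only [Mon.size]; omega)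
      | n+1, h =>
        have h1 := Atom.one_le_size a
        have h2 := Mon.one_le_size v
        have hs : (Mon.cons a v).size = a.size + v.size := rfl
        rw [enum]
        refine Finset.mem_union_right _ (Finset.mem_image.2 ⟨(a, v), ?_, rfl⟩)
        refine Finset.mem_product.2 ⟨Atom.mem_enum a n (by omega), Mon.mem_enum v n (by omega)⟩
end

mutual
theorem Atom.ell_le_wt {ℓ : ℕ} (hl : 1 ≤ ℓ) : ∀ a : Atom d, ℓ ≤ Atom.wt ℓ a
  | .star => le_refl _
  | .op _ v => by
      have := Mon.ell_le_wt hl v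
      simp only [Atom.wt]; omega
theorem Mon.ell_le_wt {ℓ : ℕ} (hl : 1 ≤ ℓ) : ∀ v : Mon d, ℓ ≤ Mon.wt ℓ v
  | .single a => Atom.ell_le_wt hl a
  | .cons a v => by
      have := Atom.ell_le_wt hl a
      have := Mon.size_le_wt hl v
      have := Mon.one_le_size v
      simp only [Mon.wt]; omega
end

def Atom.idxGe {d : ℕ} (i : ℕ) : Atom d → Bool
  | .star => false
  | .op j _ => decide (i ≤ j.val)

def Mon.isBase {d : ℕ} : Mon d → Bool
  | .single (.op _ _) => false
  | _ => true

def mbS (d ℓ n : ℕ) : Finset (Mon d) :=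
  ((enum d n).2).filter fun v => Mon.canon v = true ∧ Mon.wt ℓ v = n

def abS (d ℓ n : ℕ) : Finset (Atom d) :=
  ((enum d n).1).filter fun a => Atom.canon a = true ∧ Atom.wt ℓ a = n

def tbS (d ℓ i n : ℕ) : Finset (Atom d) :=
  ((enum d n).1).filter fun a =>
    Atom.canon a = true ∧ Atom.idxGe i a = true ∧ Atom.wt ℓ a = n

def bbS (d ℓ n : ℕ) : Finset (Mon d) :=
  ((enum d n).2).filter fun v =>
    Mon.canon v = true ∧ Mon.isBase v = true ∧ Mon.wt ℓ v = n

def cpS (d ℓ n : ℕ) : Finset (Atom d × Mon d) :=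
  ((enum d n).1 ×ˢ (enum d n).2).filter fun p =>
    Atom.canon p.1 = true ∧ Mon.canon p.2 = true ∧ Atom.wt ℓ p.1 + Mon.wt ℓ p.2 = n

section mems
variable {ℓ : ℕ}

theorem mem_mbS (hl : 1 ≤ ℓ) {n : ℕ} {v : Mon d} :
    v ∈ mbS d ℓ n ↔ (Mon.canon v = true ∧ Mon.wt ℓ v = n) := by
  rw [mbS, Finset.mem_filter, and_iff_right_iff_imp]
  rintro ⟨-, h⟩
  exact Mon.mem_enum v n (h ▸ Mon.size_le_wt hl v)

theorem mem_abS (hl : 1 ≤ ℓ) {n : ℕ} {a : Atom d} :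
    a ∈ abS d ℓ n ↔ (Atom.canon a = true ∧ Atom.wt ℓ a = n) := by
  rw [abS, Finset.mem_filter, and_iff_right_iff_imp]
  rintro ⟨-, h⟩
  exact Atom.mem_enum a n (h ▸ Atom.size_le_wt hl a)

theorem mem_tbS (hl : 1 ≤ ℓ) {i n : ℕ} {a : Atom d} :
    a ∈ tbS d ℓ i n ↔ (Atom.canon a = true ∧ Atom.idxGe i a = true ∧ Atom.wt ℓ a = n) := by
  rw [tbS, Finset.mem_filter, and_iff_right_iff_imp]
  rintro ⟨-, -, h⟩
  exact Atom.mem_enum a n (h ▸ Atom.size_le_wt hl a)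

theorem mem_bbS (hl : 1 ≤ ℓ) {n : ℕ} {v : Mon d} :
    v ∈ bbS d ℓ n ↔ (Mon.canon v = true ∧ Mon.isBase v = true ∧ Mon.wt ℓ v = n) := by
  rw [bbS, Finset.mem_filter, and_iff_right_iff_imp]
  rintro ⟨-, -, h⟩
  exact Mon.mem_enum v n (h ▸ Mon.size_le_wt hl v)

theorem mem_cpS (hl : 1 ≤ ℓ) {n : ℕ} {p : Atom d × Mon d} :
    p ∈ cpS d ℓ n ↔
      (Atom.canon p.1 = true ∧ Mon.canon p.2 = true ∧ Atom.wt ℓ p.1 + Mon.wt ℓ p.2 = n) := by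
  rw [cpS, Finset.mem_filter, and_iff_right_iff_imp]
  rintro ⟨-, -, h⟩
  refine Finset.mem_product.2 ⟨Atom.mem_enum p.1 n ?_, Mon.mem_enum p.2 n ?_⟩
  · have := Atom.size_le_wt hl p.1; omega
  · have := Mon.size_le_wt hl p.2; omega

end mems

section ids
variable {ℓ : ℕ}

theorem single_injective : Function.Injective (Mon.single : Atom d → Mon d) := by
  intro a b h; injection h

theorem op_injective (j : Fin d) : Function.Injective (Atom.op j : Mon d → Atom d) := by
  intro a b h; injection h

theorem mbS_eq_empty (hl : 1 ≤ ℓ) {n : ℕ} (h : n < ℓ) : mbS d ℓ n = ∅ := by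
  ext v
  simp only [mem_mbS hl, Finset.notMem_empty, iff_false, not_and]
  intro _
  have := Mon.ell_le_wt hl v
  omega

theorem mbS_ell (hl : 1 ≤ ℓ) : mbS d ℓ ℓ = {Mon.single Atom.star} := by
  ext v
  rw [mem_mbS hl, Finset.mem_singleton]
  constructor
  · rintro ⟨hc, hw⟩
    match v with
    | .single .star => rfl
    | .single (.op i w) =>
        exfalso
        have := Mon.ell_le_wt hl w
        simp only [Mon.wt, Atom.wt] at hw
        omega
    | .cons a w =>
        exfalso
        have h1 := Atom.ell_le_wt hl a
        have h2 := Mon.size_le_wt hl w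
        have h3 := Mon.one_le_size w
        simp only [Mon.wt] at hw
        omega
  · rintro rfl
    exact ⟨rfl, rfl⟩

theorem star_not_mem_tbS {i n : ℕ} : (Atom.star : Atom d) ∉ tbS d ℓ i n := by
  intro h
  rw [tbS, Finset.mem_filter] at h
  rcases h with ⟨-, -, h, -⟩
  simp [Atom.idxGe] at h

theorem abS_card (hl : 1 ≤ ℓ) (n : ℕ) :
    (abS d ℓ n).card = (if n = ℓ then 1 else 0) + (tbS d ℓ 0 n).card := by
  have hset : abS d ℓ n
      = if n = ℓ then insert Atom.star (tbS d ℓ 0 n) else tbS d ℓ 0 n := by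
    ext a
    rw [mem_abS hl]
    cases a with
    | star =>
        have hw : (Atom.star : Atom d).wt ℓ = ℓ := rfl
        have hc : (Atom.star : Atom d).canon = true := rfl
        by_cases hn : n = ℓ
        · simp [hn, hc, hw]
        · simp only [hn, if_false]
          constructor
          · rintro ⟨-, h⟩; exact absurd (hw ▸ h.symm) hn
          · intro h; exact absurd (star_not_mem_tbS) (fun hh => hh h)
    | op j v =>
        have hge : (Atom.op j v).idxGe 0 = true := by simp [Atom.idxGe]
        have : Atom.op j v ∈ tbS d ℓ 0 n
            ↔ ((Atom.op j v).canon = true ∧ (Atom.op j v).wt ℓ = n) := by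
          rw [mem_tbS hl, hge]
          tauto
        by_cases hn : n = ℓ
        · rw [if_pos hn, Finset.mem_insert, this]
          simp
        · rw [if_neg hn, this]
  rw [hset]
  by_cases hn : n = ℓ
  · rw [if_pos hn, if_pos hn, Finset.card_insert_of_notMem star_not_mem_tbS, Nat.add_comm]
  · rw [if_neg hn, if_neg hn, Nat.zero_add]

theorem mbS_card_split (hl : 1 ≤ ℓ) (n : ℕ) :
    (mbS d ℓ n).card = (bbS d ℓ n).card + (tbS d ℓ 0 n).card := by
  have hset : mbS d ℓ n = bbS d ℓ n ∪ (tbS d ℓ 0 n).image Mon.single := by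
    ext v
    rw [mem_mbS hl, Finset.mem_union, mem_bbS hl, Finset.mem_image]
    constructor
    · rintro ⟨hc, hw⟩
      match v with
      | .single .star => exact Or.inl ⟨hc, rfl, hw⟩
      | .single (.op j w) =>
          refine Or.inr ⟨.op j w, ?_, rfl⟩
          rw [mem_tbS hl]
          exact ⟨hc, by simp [Atom.idxGe], hw⟩
      | .cons a w => exact Or.inl ⟨hc, rfl, hw⟩
    · rintro (⟨hc, _, hw⟩ | ⟨a, ha, rfl⟩)
      · exact ⟨hc, hw⟩
      · rw [mem_tbS hl] at ha
        exact ⟨ha.1, ha.2.2⟩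
  rw [hset, Finset.card_union_of_disjoint, Finset.card_image_of_injective _ single_injective]
  intro s h1 h2 a ha
  have hb := h1 ha
  have hi := h2 ha
  rw [mem_bbS hl] at hb
  rw [Finset.mem_image] at hi
  obtain ⟨b, hbm, rfl⟩ := hi
  rw [mem_tbS hl] at hbm
  exfalso
  rcases hb with ⟨-, hbase, -⟩
  rcases hbm with ⟨-, hge, -⟩
  cases b with
  | star => simp [Atom.idxGe] at hge
  | op j w => simp [Mon.isBase] at hbase

theorem tbS_empty_of_ge (i n : ℕ) (hi : d ≤ i) : tbS d ℓ i n = ∅ := by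
  ext a
  simp only [tbS, Finset.mem_filter, Finset.notMem_empty, iff_false, not_and]
  intro _ _
  cases a with
  | star => simp [Atom.idxGe]
  | op j v =>
      simp only [Atom.idxGe, decide_eq_true_eq]
      have := j.isLt
      omega

end ids

section rec
variable {ℓ : ℕ}

theorem tbS_small (h2 : n < 2) {i : ℕ} : tbS d ℓ i n = ∅ := by
  ext a
  simp only [tbS, Finset.mem_filter, Finset.notMem_empty, iff_false, not_and]
  intro _ hc hge
  cases a with
  | star => simp [Atom.idxGe] at hge
  | op j v =>
      simp only [Atom.wt]
      omega

theorem bbS_zero (hl : 1 ≤ ℓ) : bbS d ℓ 0 = ∅ := by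
  ext v
  simp only [mem_bbS hl, Finset.notMem_empty, iff_false, not_and]
  intro _ _
  have := Mon.ell_le_wt hl v
  omega

theorem tbS_card_rec (hl : 1 ≤ ℓ) {i : ℕ} (hi : i < d) {n : ℕ} (hn : 2 ≤ n) :
    (tbS d ℓ i n).card
      = (tbS d ℓ (i+1) n).card + ((bbS d ℓ (n-2)).card + (tbS d ℓ i (n-2)).card) := by
  set inner : Finset (Mon d) := bbS d ℓ (n-2) ∪ (tbS d ℓ i (n-2)).image Mon.single with hinner
  have hmem_inner : ∀ v : Mon d, v ∈ inner ↔
      (Mon.canon v = true ∧ Mon.topOk ⟨i, hi⟩ v = true ∧ Mon.wt ℓ v = n - 2) := by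
    intro v
    rw [hinner, Finset.mem_union, mem_bbS hl, Finset.mem_image]
    constructor
    · rintro (⟨hc, hb, hw⟩ | ⟨b, hb, rfl⟩)
      · refine ⟨hc, ?_, hw⟩
        match v with
        | .single .star => rfl
        | .cons a w => rfl
        | .single (.op k w) => simp [Mon.isBase] at hb
      · rw [mem_tbS hl] at hb
        obtain ⟨hc, hge, hw⟩ := hb
        match b with
        | .star => simp [Atom.idxGe] at hge
        | .op k w =>
            refine ⟨hc, ?_, hw⟩
            simp only [Atom.idxGe, decide_eq_true_eq] at hge
            simp only [Mon.topOk, decide_eq_true_eq]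
            exact hge
    · rintro ⟨hc, ht, hw⟩
      match v with
      | .single .star => exact Or.inl ⟨hc, rfl, hw⟩
      | .cons a w => exact Or.inl ⟨hc, rfl, hw⟩
      | .single (.op k w) =>
          refine Or.inr ⟨.op k w, ?_, rfl⟩
          rw [mem_tbS hl]
          simp only [Mon.topOk, decide_eq_true_eq] at ht
          exact ⟨hc, by simp [Atom.idxGe]; exact ht, hw⟩
  have hset : tbS d ℓ i n
      = tbS d ℓ (i+1) n ∪ inner.image (Atom.op ⟨i, hi⟩) := by
    ext a
    rw [mem_tbS hl, Finset.mem_union, mem_tbS hl, Finset.mem_image]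
    cases a with
    | star =>
        constructor
        · rintro ⟨-, hge, -⟩; simp [Atom.idxGe] at hge
        · rintro (⟨-, hge, -⟩ | ⟨w, -, hw⟩)
          · simp [Atom.idxGe] at hge
          · exact absurd hw (by intro h; cases h)
    | op j v =>
        have hcanon : (Atom.op j v).canon = (Mon.canon v && Mon.topOk j v) := rfl
        have hwt : (Atom.op j v).wt ℓ = 2 + Mon.wt ℓ v := rfl
        have hge1 : ∀ m : ℕ, (Atom.op j v).idxGe m = decide (m ≤ j.val) := fun _ => rfl
        constructor
        · rintro ⟨hc, hge, hw⟩
          simp only [hge1, decide_eq_true_eq] at hge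
          rcases Nat.lt_or_ge j.val (i+1) with hj | hj
          · have hj' : j = ⟨i, hi⟩ := Fin.ext (show j.val = i by omega)
            subst hj'
            refine Or.inr ⟨v, ?_, rfl⟩
            rw [hmem_inner]
            simp only [hcanon, Bool.and_eq_true] at hc
            exact ⟨hc.1, hc.2, by omega⟩
          · exact Or.inl ⟨hc, by simp [hge1]; omega, hw⟩
        · rintro (⟨hc, hge, hw⟩ | ⟨w, hwmem, heq⟩)
          · simp only [hge1, decide_eq_true_eq] at hge
            exact ⟨hc, by simp [hge1]; omega, hw⟩
          · cases heq
            rw [hmem_inner] at hwmem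
            obtain ⟨hc, ht, hw⟩ := hwmem
            refine ⟨?_, ?_, ?_⟩
            · rw [hcanon]
              simp [hc, ht]
            · simp [hge1]
            · rw [hwt]; omega
  rw [hset, Finset.card_union_of_disjoint, Finset.card_image_of_injective _ (op_injective _),
    hinner, Finset.card_union_of_disjoint, Finset.card_image_of_injective _ single_injective]
  · rw [Finset.disjoint_left]
    rintro v hv hv'
    rw [mem_bbS hl] at hv
    rw [Finset.mem_image] at hv'
    obtain ⟨b, hb, rfl⟩ := hv'
    rw [mem_tbS hl] at hb
    rcases hb with ⟨-, hge, -⟩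
    rcases hv with ⟨-, hbase, -⟩
    cases b with
    | star => simp [Atom.idxGe] at hge
    | op k w => simp [Mon.isBase] at hbase
  · rw [Finset.disjoint_left]
    rintro a ha ha'
    rw [mem_tbS hl] at ha
    rw [Finset.mem_image] at ha'
    obtain ⟨w, -, rfl⟩ := ha'
    rcases ha with ⟨-, hge, -⟩
    simp only [Atom.idxGe, decide_eq_true_eq] at hge
    omega

end rec

section conv
variable {ℓ : ℕ}

theorem cons_pair_injective :
    Function.Injective (fun p : Atom d × Mon d => Mon.cons p.1 p.2) := by
  rintro ⟨a, v⟩ ⟨b, w⟩ h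
  simp only at h
  injection h with h1 h2
  simp [h1, h2]

theorem mbS_card_cons (hl : 1 ≤ ℓ) (n : ℕ) :
    (mbS d ℓ n).card = (abS d ℓ n).card + (cpS d ℓ n).card := by
  have hset : mbS d ℓ n
      = (abS d ℓ n).image Mon.single ∪ (cpS d ℓ n).image (fun p => Mon.cons p.1 p.2) := by
    ext v
    rw [mem_mbS hl, Finset.mem_union, Finset.mem_image, Finset.mem_image]
    constructor
    · rintro ⟨hc, hw⟩
      match v with
      | .single a =>
          refine Or.inl ⟨a, ?_, rfl⟩
          rw [mem_abS hl]
          exact ⟨hc, hw⟩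
      | .cons a w =>
          refine Or.inr ⟨(a, w), ?_, rfl⟩
          rw [mem_cpS hl]
          have hc' : (Mon.cons a w).canon = (Atom.canon a && Mon.canon w) := rfl
          rw [hc', Bool.and_eq_true] at hc
          exact ⟨hc.1, hc.2, hw⟩
    · rintro (⟨a, ha, rfl⟩ | ⟨p, hp, rfl⟩)
      · rw [mem_abS hl] at ha
        exact ⟨ha.1, ha.2⟩
      · rw [mem_cpS hl] at hp
        obtain ⟨h1, h2, h3⟩ := hp
        refine ⟨?_, h3⟩
        have hc' : (Mon.cons p.1 p.2).canon = (Atom.canon p.1 && Mon.canon p.2) := rfl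
        rw [hc', Bool.and_eq_true]
        exact ⟨h1, h2⟩
  rw [hset, Finset.card_union_of_disjoint, Finset.card_image_of_injective _ single_injective,
    Finset.card_image_of_injective _ cons_pair_injective]
  rw [Finset.disjoint_left]
  rintro v hv hv'
  rw [Finset.mem_image] at hv hv'
  obtain ⟨a, -, rfl⟩ := hv
  obtain ⟨p, -, hp⟩ := hv'
  exact absurd hp (by intro h; cases h)

theorem cpS_card (hl : 1 ≤ ℓ) (n : ℕ) :
    (cpS d ℓ n).card
      = ∑ p ∈ Finset.HasAntidiagonal.antidiagonal n, (abS d ℓ p.1).card * (mbS d ℓ p.2).card := by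
  rw [Finset.card_eq_sum_card_fiberwise
    (f := fun q : Atom d × Mon d => (Atom.wt ℓ q.1, Mon.wt ℓ q.2))
    (t := Finset.HasAntidiagonal.antidiagonal n) ?_]
  · refine Finset.sum_congr rfl ?_
    rintro ⟨r, m⟩ hp
    rw [Finset.HasAntidiagonal.mem_antidiagonal] at hp
    have hfib : (cpS d ℓ n).filter
        (fun q : Atom d × Mon d => (Atom.wt ℓ q.1, Mon.wt ℓ q.2) = (r, m))
        = abS d ℓ r ×ˢ mbS d ℓ m := by
      ext q
      rw [Finset.mem_filter, mem_cpS hl, Finset.mem_product, mem_abS hl, mem_mbS hl,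
        Prod.mk.injEq]
      constructor
      · rintro ⟨⟨h1, h2, h3⟩, h4, h5⟩
        exact ⟨⟨h1, h4⟩, ⟨h2, h5⟩⟩
      · rintro ⟨⟨h1, h4⟩, ⟨h2, h5⟩⟩
        exact ⟨⟨h1, h2, by omega⟩, h4, h5⟩
    rw [hfib, Finset.card_product]
  · intro q hq
    rw [Finset.mem_coe, mem_cpS hl] at hq
    rw [Finset.mem_coe, Finset.HasAntidiagonal.mem_antidiagonal]
    exact hq.2.2

end conv

open PowerSeries in
noncomputable def PBs (d ℓ : ℕ) : PowerSeries ℚ := PowerSeries.mk fun n => ((mbS d ℓ n).card : ℚ)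
open PowerSeries in
noncomputable def PAs (d ℓ : ℕ) : PowerSeries ℚ := PowerSeries.mk fun n => ((abS d ℓ n).card : ℚ)
open PowerSeries in
noncomputable def PTs (d ℓ i : ℕ) : PowerSeries ℚ := PowerSeries.mk fun n => ((tbS d ℓ i n).card : ℚ)
open PowerSeries in
noncomputable def PBbs (d ℓ : ℕ) : PowerSeries ℚ := PowerSeries.mk fun n => ((bbS d ℓ n).card : ℚ)

section ps
open PowerSeries
variable {ℓ : ℕ}

theorem eqB (hl : 1 ≤ ℓ) : PBs d ℓ = PAs d ℓ * (1 + PBs d ℓ) := by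
  ext n
  rw [mul_one_add, map_add, coeff_mul]
  simp only [PBs, PAs, coeff_mk]
  rw [mbS_card_cons hl, cpS_card hl]
  push_cast
  ring

theorem eqA (hl : 1 ≤ ℓ) : PAs d ℓ = (X : PowerSeries ℚ)^ℓ + PTs d ℓ 0 := by
  ext n
  rw [map_add, coeff_X_pow]
  simp only [PAs, PTs, coeff_mk]
  rw [abS_card hl]
  push_cast
  split <;> simp

theorem eqBb (hl : 1 ≤ ℓ) : PBs d ℓ = PBbs d ℓ + PTs d ℓ 0 := by
  ext n
  rw [map_add]
  simp only [PBs, PBbs, PTs, coeff_mk]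
  rw [mbS_card_split hl]
  push_cast
  ring

theorem eqT (hl : 1 ≤ ℓ) {i : ℕ} (hi : i < d) :
    PTs d ℓ i = PTs d ℓ (i+1) + X^2 * (PBbs d ℓ + PTs d ℓ i) := by
  ext n
  rw [map_add, coeff_X_pow_mul', map_add]
  simp only [PTs, PBbs, coeff_mk]
  by_cases hn : 2 ≤ n
  · rw [if_pos hn, tbS_card_rec hl hi hn]
    push_cast
    ring
  · rw [if_neg hn, tbS_small (by omega), tbS_small (by omega)]
    simp

theorem eqTd : PTs d ℓ d = 0 := by
  ext n
  simp only [PTs, coeff_mk, map_zero]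
  rw [tbS_empty_of_ge _ _ (le_refl d)]
  simp

theorem key (hl : 1 ≤ ℓ) :
    (1 - (X : PowerSeries ℚ)^2)^d * (PBs d ℓ + (PBs d ℓ)^2)
      = X^ℓ * (1 + PBs d ℓ) + (PBs d ℓ)^2 := by
  have h1 : ∀ k i : ℕ, i + k = d →
      (1 - (X : PowerSeries ℚ)^2)^k * PTs d ℓ i
        = (1 - (1 - (X : PowerSeries ℚ)^2)^k) * PBbs d ℓ := by
    intro k
    induction k with
    | zero =>
        intro i hi
        have : i = d := by omega
        subst this
        rw [eqTd]
        ring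
    | succ k ih =>
        intro i hi
        have hid : i < d := by omega
        have h2 := eqT (d := d) hl hid
        have h3 := ih (i+1) (by omega)
        linear_combination ((1 - (X : PowerSeries ℚ)^2)^k) * h2 + h3
  have h0 := h1 d 0 (by omega)
  have h5 : PTs d ℓ 0 = (1 - (1 - (X : PowerSeries ℚ)^2)^d) * PBs d ℓ := by
    linear_combination h0 + ((1 - (X : PowerSeries ℚ)^2)^d - 1) * (eqBb (d := d) hl)
  linear_combination eqB (d := d) hl + (1 + PBs d ℓ) * (eqA (d := d) hl)
    + (1 + PBs d ℓ) * h5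

end ps

noncomputable def sqQ (d ℓ m : ℕ) : ℚ := PowerSeries.coeff m ((PBs d ℓ)^2)

section extract
open PowerSeries
variable {ℓ : ℕ}

theorem mb_zero (hl : 1 ≤ ℓ) : (mbS d ℓ 0).card = 0 := by
  rw [mbS_eq_empty hl (by omega)]; rfl

theorem sq_eq (hl : 1 ≤ ℓ) (m : ℕ) :
    sqQ d ℓ m = ∑ r ∈ Finset.Icc 1 (m-1), ((mbS d ℓ r).card : ℚ) * ((mbS d ℓ (m-r)).card : ℚ) := by
  rw [sqQ, pow_two, coeff_mul, Finset.Nat.sum_antidiagonal_eq_sum_range_succ_mk]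
  simp only [PBs, coeff_mk]
  symm
  apply Finset.sum_subset
  · intro r hr
    rw [Finset.mem_Icc] at hr
    rw [Finset.mem_range]
    omega
  · intro r hr hr'
    rw [Finset.mem_range] at hr
    rw [Finset.mem_Icc] at hr'
    have : r = 0 ∨ r = m := by omega
    rcases this with rfl | rfl
    · rw [mb_zero hl]; simp
    · rw [Nat.sub_self, mb_zero hl]; simp

theorem coeff_key (hl : 1 ≤ ℓ) {n : ℕ} (hn : ℓ + 1 ≤ n) :
    ((mbS d ℓ n).card : ℚ)
      = ((mbS d ℓ (n-ℓ)).card : ℚ)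
        + ∑ j ∈ Finset.Icc 1 (min d (n/2)),
            (-1 : ℚ)^(j+1) * (d.choose j : ℚ) *
              (((mbS d ℓ (n - 2*j)).card : ℚ) + sqQ d ℓ (n - 2*j)) := by
  have H := congrArg (PowerSeries.coeff n) (key (d := d) (ℓ := ℓ) hl)
  have hG : (1 - (X : PowerSeries ℚ)^2)^d
      = ∑ j ∈ Finset.range (d+1),
          PowerSeries.C ((-1)^j * (d.choose j : ℚ)) * (X^(2*j)) := by
    rw [show (1 - (X : PowerSeries ℚ)^2) = (-(X^2) + 1) by ring, add_pow]
    refine Finset.sum_congr rfl fun j _ => ?_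
    rw [one_pow, mul_one, neg_pow, pow_mul, map_mul, map_pow, map_neg, map_one, map_natCast]
    ring
  rw [hG, Finset.sum_mul] at H
  rw [map_add, coeff_X_pow_mul', if_pos (by omega : ℓ ≤ n), map_add,
    coeff_one, if_neg (by omega : ¬ n - ℓ = 0), map_sum] at H
  have hterm : ∀ j ∈ Finset.range (d+1),
      PowerSeries.coeff n
          (PowerSeries.C ((-1)^j * (d.choose j : ℚ)) * X^(2*j) * (PBs d ℓ + (PBs d ℓ)^2))
        = (-1 : ℚ)^j * (d.choose j : ℚ) *
            (if 2*j ≤ n then ((mbS d ℓ (n - 2*j)).card : ℚ) + sqQ d ℓ (n - 2*j) else 0) := by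
    intro j _
    rw [mul_assoc, coeff_C_mul, coeff_X_pow_mul']
    congr 1
    split
    · rw [map_add]
      simp only [PBs, coeff_mk, sqQ]
    · rfl
  rw [Finset.sum_congr rfl hterm, Finset.sum_range_succ'] at H
  simp only [pow_zero, Nat.choose_zero_right, Nat.cast_one, one_mul, Nat.mul_zero,
    Nat.zero_le, if_true, Nat.sub_zero] at H
  -- H : ∑ i ∈ range d, f (i+1) + (mb n + sqQ n) = (0 + mb (n-ℓ)) + sqQ n
  have hsum : ∑ j ∈ Finset.Icc 1 (min d (n/2)),
        (-1 : ℚ)^(j+1) * (d.choose j : ℚ) *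
          (((mbS d ℓ (n - 2*j)).card : ℚ) + sqQ d ℓ (n - 2*j))
      = - ∑ i ∈ Finset.range d,
          (-1 : ℚ)^(i+1) * (d.choose (i+1) : ℚ) *
            (if 2*(i+1) ≤ n then ((mbS d ℓ (n - 2*(i+1))).card : ℚ)
              + sqQ d ℓ (n - 2*(i+1)) else 0) := by
    have step1 : ∑ j ∈ Finset.Icc 1 (min d (n/2)),
          (-1 : ℚ)^(j+1) * (d.choose j : ℚ) *
            (((mbS d ℓ (n - 2*j)).card : ℚ) + sqQ d ℓ (n - 2*j))
        = ∑ j ∈ Finset.Icc 1 d,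
            (-1 : ℚ)^(j+1) * (d.choose j : ℚ) *
              (if 2*j ≤ n then ((mbS d ℓ (n - 2*j)).card : ℚ) + sqQ d ℓ (n - 2*j) else 0) := by
      rw [← Finset.sum_subset (Finset.Icc_subset_Icc_right (min_le_left d (n/2)))]
      · refine Finset.sum_congr rfl fun j hj => ?_
        rw [Finset.mem_Icc] at hj
        have h2j : 2*j ≤ n := by
          have := hj.2
          have : j ≤ n / 2 := by omega
          omega
        rw [if_pos h2j]
      · intro j hj hj'
        rw [Finset.mem_Icc] at hj hj'
        have : ¬ (2*j ≤ n) := by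
          have : n / 2 < j := by omega
          omega
        rw [if_neg this, mul_zero]
    rw [step1, ← Finset.Ico_add_one_right_eq_Icc, Finset.sum_Ico_eq_sum_range]
    rw [← Finset.sum_neg_distrib]
    refine Finset.sum_congr rfl fun i _ => ?_
    rw [show 1 + i = i + 1 by omega]
    ring
  have hb : (PowerSeries.coeff (n - ℓ)) (PBs d ℓ) = ((mbS d ℓ (n-ℓ)).card : ℚ) := by
    simp only [PBs, coeff_mk]
  have hc : (PowerSeries.coeff n) ((PBs d ℓ)^2) = sqQ d ℓ n := rfl
  rw [hb, hc] at H
  rw [hsum]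
  linarith [H]

end extract

theorem bc_eq {d ℓ : ℕ} (hl : 1 ≤ ℓ) (n : ℕ) : bc d ℓ n = (mbS d ℓ n).card := by
  classical
  have H : ∀ v : Mon d, v ∈ mbS d ℓ n
      ↔ (MonCanon v ∧ ℓ * v.deg + 2 * (∑ i, v.mult i) = n) := by
    intro v
    rw [mem_mbS hl, Mon.canon_iff, Mon.wt_eq]
  haveI := Fintype.subtype (mbS d ℓ n) H
  rw [bc, Nat.card_eq_fintype_card, Fintype.card_of_subtype _ H]

/-- `b^c_{d,ℓ}(ℓ) = 1` and, for every `n ≥ ℓ+1`,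
`b^c_{d,ℓ}(n) = b^c_{d,ℓ}(n−ℓ) + Σ_{j=1}^{min(d,⌊n/2⌋)} (−1)^{j+1}·C(d,j)·
( b^c_{d,ℓ}(n−2j) + Σ_{r=1}^{n−2j−1} b^c_{d,ℓ}(r)·b^c_{d,ℓ}(n−2j−r) )`.
(The convention `b^c_{d,ℓ}(j) = 0` for `j ≤ ℓ−1` holds by definition.) -/
theorem bc_recurrence (d ℓ : ℕ) (hd : 1 ≤ d) (hl : 1 ≤ ℓ) :
    bc d ℓ ℓ = 1 ∧
    (∀ n : ℕ, ℓ + 1 ≤ n →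
      (bc d ℓ n : ℚ)
        = (bc d ℓ (n - ℓ) : ℚ)
          + ∑ j ∈ Finset.Icc 1 (min d (n / 2)),
              (-1 : ℚ) ^ (j + 1) * (d.choose j : ℚ) *
                ((bc d ℓ (n - 2 * j) : ℚ)
                  + ∑ r ∈ Finset.Icc 1 (n - 2 * j - 1),
                      (bc d ℓ r : ℚ) * (bc d ℓ (n - 2 * j - r) : ℚ))) := by
  constructor
  · rw [bc_eq hl, mbS_ell hl, Finset.card_singleton]
  · intro n hn
    simp only [bc_eq hl]
    rw [coeff_key hl hn]
    refine congrArg _ (Finset.sum_congr rfl fun j hj => ?_)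
    rw [sq_eq hl]

end MultiOp
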